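/- arXiv:math/0609715 — 6 statements merged into one kernel-verified Lean document; each statement's English description precedes it below -/
import Mathlib

section
/- Let H be a Hopf π-coalgebra and (C, σ) a Hopf π-subcoalgebra. Define B_α = { h ∈ H_α : (σ_1 ⊗ I_α)Δ^H_{1,α}(h) = 1 ⊗ h }. Then each B_α is a subalgebra of H_α, and B = {B_α} is a right π-coideal of H, i.e. Δ^H_{α,β}(B_{αβ}) ⊆ B_α ⊗ H_β for all α, β ∈ π. -/
open TensorProduct LinearMap

/-- The data and axioms of a `π`-coalgebra over `K`: a family of `K`-vector spaces
`C α` indexed by a group `π`, with comultiplications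
`Δ_{α,β} : C_{αβ} → C α ⊗ C β` and a counit `ε : C 1 → K`, satisfying
coassociativity and counitality.  (To avoid dependent-type issues, the
comultiplication takes an index `γ` together with a proof `α * β = γ`.) -/
structure PiCoalg (K : Type*) [Field K] (π : Type*) [Group π]
    (C : π → Type*) [∀ α, AddCommGroup (C α)] [∀ α, Module K (C α)] where
  comul : ∀ (α β : π) {γ : π}, α * β = γ → (C γ →ₗ[K] C α ⊗[K] C β)
  counit : C 1 →ₗ[K] K
  coassoc : ∀ (α β γ δ : π) (h : α * β * γ = δ) (h' : α * (β * γ) = δ),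
    (TensorProduct.assoc K (C α) (C β) (C γ)).toLinearMap ∘ₗ
        (TensorProduct.map (comul α β rfl) LinearMap.id) ∘ₗ comul (α * β) γ h
      = (TensorProduct.map LinearMap.id (comul β γ rfl)) ∘ₗ comul α (β * γ) h'
  counit_comul : ∀ (α : π),
    (TensorProduct.lid K (C α)).toLinearMap ∘ₗ
        (TensorProduct.map counit LinearMap.id) ∘ₗ comul 1 α (one_mul α)
      = LinearMap.id
  comul_counit : ∀ (α : π),
    (TensorProduct.rid K (C α)).toLinearMap ∘ₗ
        (TensorProduct.map LinearMap.id counit) ∘ₗ comul α 1 (mul_one α)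
      = LinearMap.id

/-- A Hopf `π`-coalgebra: a `π`-coalgebra whose components are `K`-algebras,
whose comultiplications and counit are algebra maps, together with an antipode
family `S_α : H α → H α⁻¹` satisfying the antipode axioms. -/
structure HopfPiCoalg (K : Type*) [Field K] (π : Type*) [Group π]
    (H : π → Type*) [∀ α, Ring (H α)] [∀ α, Algebra K (H α)]
    extends PiCoalg K π H where
  comul_mul : ∀ (α β γ : π) (h : α * β = γ) (x y : H γ),
    comul α β h (x * y) = comul α β h x * comul α β h y
  comul_one : ∀ (α β γ : π) (h : α * β = γ), comul α β h (1 : H γ) = 1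
  counit_mul : ∀ (x y : H 1), counit (x * y) = counit x * counit y
  counit_one : counit (1 : H 1) = 1
  antipode : ∀ (α β : π), α⁻¹ = β → (H α →ₗ[K] H β)
  antipode_left : ∀ (α : π),
    (LinearMap.mul' K (H α)) ∘ₗ
        (TensorProduct.map (antipode α⁻¹ α (inv_inv α)) LinearMap.id) ∘ₗ
          comul α⁻¹ α (inv_mul_cancel α)
      = (Algebra.linearMap K (H α)) ∘ₗ counit
  antipode_right : ∀ (α : π),
    (LinearMap.mul' K (H α)) ∘ₗ
        (TensorProduct.map LinearMap.id (antipode α⁻¹ α (inv_inv α))) ∘ₗ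
          comul α α⁻¹ (mul_inv_cancel α)
      = (Algebra.linearMap K (H α)) ∘ₗ counit

/-- A Hopf `π`-subcoalgebra `(C, σ)` of a Hopf `π`-coalgebra `H`: a Hopf
`π`-coalgebra `C` together with a family of surjective algebra epimorphisms
`σ_α : H α → C α` commuting with comultiplication, counit and antipode. -/
structure HopfPiSub (K : Type*) [Field K] (π : Type*) [Group π]
    (H : π → Type*) [∀ α, Ring (H α)] [∀ α, Algebra K (H α)]
    (C : π → Type*) [∀ α, Ring (C α)] [∀ α, Algebra K (C α)]
    (hH : HopfPiCoalg K π H) (hC : HopfPiCoalg K π C) where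
  σ : ∀ α, H α →ₗ[K] C α
  σ_surj : ∀ α, Function.Surjective (σ α)
  σ_mul : ∀ (α : π) (x y : H α), σ α (x * y) = σ α x * σ α y
  σ_one : ∀ (α : π), σ α (1 : H α) = 1
  σ_comul : ∀ (α β γ : π) (h : α * β = γ),
    (hC.comul α β h) ∘ₗ σ γ = (TensorProduct.map (σ α) (σ β)) ∘ₗ hH.comul α β h
  σ_counit : hC.counit ∘ₗ σ 1 = hH.counit
  σ_antipode : ∀ (α β : π) (h : α⁻¹ = β),
    (hC.antipode α β h) ∘ₗ σ α = (σ β) ∘ₗ hH.antipode α β h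

/-- A left `π`-coisotropic quantum subgroup `(C, σ)` of a Hopf `π`-coalgebra `H`:
a `π`-coalgebra `C` whose components are left `H α`-modules (the action being
recorded as a linear map `ω_α : H α ⊗ C α → C α`), together with surjective
left-module maps `σ_α : H α → C α` intertwining comultiplication and counit. -/
structure Coisotropic (K : Type*) [Field K] (π : Type*) [Group π]
    (H : π → Type*) [∀ α, Ring (H α)] [∀ α, Algebra K (H α)]
    (C : π → Type*) [∀ α, AddCommGroup (C α)] [∀ α, Module K (C α)]
    (hH : HopfPiCoalg K π H) (hC : PiCoalg K π C) where
  ω : ∀ α, H α ⊗[K] C α →ₗ[K] C α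
  ω_assoc : ∀ (α : π) (h k : H α) (c : C α),
    ω α ((h * k) ⊗ₜ[K] c) = ω α (h ⊗ₜ[K] ω α (k ⊗ₜ[K] c))
  ω_one : ∀ (α : π) (c : C α), ω α ((1 : H α) ⊗ₜ[K] c) = c
  σ : ∀ α, H α →ₗ[K] C α
  σ_surj : ∀ α, Function.Surjective (σ α)
  σ_mod : ∀ (α : π) (h k : H α), σ α (h * k) = ω α (h ⊗ₜ[K] σ α k)
  σ_comul : ∀ (α β γ : π) (h : α * β = γ),
    (hC.comul α β h) ∘ₗ σ γ = (TensorProduct.map (σ α) (σ β)) ∘ₗ hH.comul α β h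
  σ_counit : hC.counit ∘ₗ σ 1 = hH.counit

/-- A right `π`-comodule `M` over a `π`-coalgebra `C`, with coactions
`θ_{α,β} : M_{αβ} → M α ⊗ C β` satisfying coassociativity and counitality. -/
structure PiComodule (K : Type*) [Field K] (π : Type*) [Group π]
    (C : π → Type*) [∀ α, AddCommGroup (C α)] [∀ α, Module K (C α)]
    (M : π → Type*) [∀ α, AddCommGroup (M α)] [∀ α, Module K (M α)]
    (hC : PiCoalg K π C) where
  coact : ∀ (α β : π) {γ : π}, α * β = γ → (M γ →ₗ[K] M α ⊗[K] C β)
  coassoc : ∀ (α β γ δ : π) (h : α * β * γ = δ) (h' : α * (β * γ) = δ),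
    (TensorProduct.assoc K (M α) (C β) (C γ)).toLinearMap ∘ₗ
        (TensorProduct.map (coact α β rfl) LinearMap.id) ∘ₗ coact (α * β) γ h
      = (TensorProduct.map LinearMap.id (hC.comul β γ rfl)) ∘ₗ coact α (β * γ) h'
  coact_counit : ∀ (α : π),
    (TensorProduct.rid K (M α)).toLinearMap ∘ₗ
        (TensorProduct.map LinearMap.id hC.counit) ∘ₗ coact α 1 (mul_one α)
      = LinearMap.id

/-- A left section `g` of a Hopf `π`-subcoalgebra `(C, σ)`: a family of linear
maps `g_α : C α → H α` with convolution inverse `g⁻¹ = {g_α⁻¹ : C_{α⁻¹} → H α}`,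
such that `g_α(1) = 1` and `L_{1,α} ∘ g_α = (I ⊗ g_α) ∘ Δ^C_{1,α}`. -/
structure PiSection (K : Type*) [Field K] (π : Type*) [Group π]
    (H : π → Type*) [∀ α, Ring (H α)] [∀ α, Algebra K (H α)]
    (C : π → Type*) [∀ α, Ring (C α)] [∀ α, Algebra K (C α)]
    (hH : HopfPiCoalg K π H) (hC : HopfPiCoalg K π C)
    (S : HopfPiSub K π H C hH hC) where
  g : ∀ α, C α →ₗ[K] H α
  ginv : ∀ (α β : π), β = α⁻¹ → (C β →ₗ[K] H α)
  g_one : ∀ α, g α (1 : C α) = 1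
  g_sec : ∀ α,
    ((TensorProduct.map (S.σ 1) LinearMap.id) ∘ₗ hH.comul 1 α (one_mul α)) ∘ₗ g α
      = (TensorProduct.map LinearMap.id (g α)) ∘ₗ hC.comul 1 α (one_mul α)
  conv_right : ∀ α,
    (LinearMap.mul' K (H α)) ∘ₗ (TensorProduct.map (g α) (ginv α α⁻¹ rfl)) ∘ₗ
        hC.comul α α⁻¹ (mul_inv_cancel α)
      = (Algebra.linearMap K (H α)) ∘ₗ hC.counit
  conv_left : ∀ α,
    (LinearMap.mul' K (H α)) ∘ₗ (TensorProduct.map (ginv α α⁻¹ rfl) (g α)) ∘ₗ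
        hC.comul α⁻¹ α (inv_mul_cancel α)
      = (Algebra.linearMap K (H α)) ∘ₗ hC.counit

/-- The subspace `B = {h : L(h) = u ⊗ h}` (for `u = 1` this is the `π`-quantum
right embeddable homogeneous space). -/
noncomputable def Bsub (K : Type*) [Field K] {C1 Hα : Type*}
    [AddCommGroup C1] [Module K C1] [AddCommGroup Hα] [Module K Hα]
    (L1 : Hα →ₗ[K] C1 ⊗[K] Hα) (u : C1) : Submodule K Hα :=
  LinearMap.ker (L1 - (TensorProduct.mk K C1 Hα) u)

/-- The induced representation space
`Ind(ρ)_α = { x ∈ V₁ ⊗ H_α : (I ⊗ L_{1,α}) x = (ρ_{1,1} ⊗ I) x }`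
(the right-hand side being reassociated canonically). -/
noncomputable def IndSub (K : Type*) [Field K] {V1 C1 Hα : Type*}
    [AddCommGroup V1] [Module K V1] [AddCommGroup C1] [Module K C1]
    [AddCommGroup Hα] [Module K Hα]
    (L1 : Hα →ₗ[K] C1 ⊗[K] Hα) (ρ11 : V1 →ₗ[K] V1 ⊗[K] C1) :
    Submodule K (V1 ⊗[K] Hα) :=
  LinearMap.ker ((TensorProduct.map LinearMap.id L1) -
    (TensorProduct.assoc K V1 C1 Hα).toLinearMap ∘ₗ
      (TensorProduct.map ρ11 LinearMap.id))

section Aux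

/-- Cast map between fibers of a type family along an equality of indices. -/
noncomputable def lcast (K : Type*) [Field K] {π : Type*} (H : π → Type*)
    [∀ α, AddCommGroup (H α)] [∀ α, Module K (H α)] {a a' : π} (e : a = a') :
    H a →ₗ[K] H a' := e ▸ LinearMap.id

variable {K : Type*} [Field K] {π : Type*} [Group π]
  {H : π → Type*} [∀ α, AddCommGroup (H α)] [∀ α, Module K (H α)]

theorem comul_transport (P : PiCoalg K π H) {a b c c' : π}
    (p : a * b = c) (p' : a * b = c') (e : c = c') (y : H c) :
    P.comul a b p' (lcast K H e y) = P.comul a b p y := by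
  subst e; rfl

theorem comul_fst (P : PiCoalg K π H) {a a' b c : π}
    (e : a = a') (p : a * b = c) (p' : a' * b = c) (y : H c) :
    P.comul a' b p' y
      = TensorProduct.map (lcast K H e) LinearMap.id (P.comul a b p y) := by
  subst e
  rw [show lcast K H (rfl : a = a) = LinearMap.id from rfl, TensorProduct.map_id]
  rfl

theorem mk_map_eq {M N P : Type*} [AddCommGroup M] [Module K M]
    [AddCommGroup N] [Module K N] [AddCommGroup P] [Module K P]
    (u : M) (t : N ⊗[K] P) :
    TensorProduct.map (TensorProduct.mk K M N u) LinearMap.id t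
      = (TensorProduct.assoc K M N P).symm (u ⊗ₜ[K] t) := by
  induction t using TensorProduct.induction_on with
  | zero => simp
  | tmul a b => simp [TensorProduct.assoc_symm_tmul]
  | add s t hs ht => simp [TensorProduct.tmul_add, hs, ht]

theorem map_mul_of_mul {A B A' B' : Type*} [Ring A] [Algebra K A]
    [Ring B] [Algebra K B] [Ring A'] [Algebra K A'] [Ring B'] [Algebra K B']
    (f : A →ₗ[K] A') (g : B →ₗ[K] B')
    (hf : ∀ x y, f (x * y) = f x * f y) (hg : ∀ x y, g (x * y) = g x * g y)
    (x y : A ⊗[K] B) :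
    TensorProduct.map f g (x * y)
      = TensorProduct.map f g x * TensorProduct.map f g y := by
  induction x using TensorProduct.induction_on with
  | zero => simp
  | tmul a b =>
    induction y using TensorProduct.induction_on with
    | zero => simp
    | tmul c d => simp [Algebra.TensorProduct.tmul_mul_tmul, hf, hg]
    | add s t hs ht => simp only [mul_add, map_add, hs, ht]
  | add s t hs ht => simp only [add_mul, map_add, hs, ht]

theorem map_map_id {M N P E : Type*} [AddCommGroup M] [Module K M]
    [AddCommGroup N] [Module K N] [AddCommGroup P] [Module K P]
    [AddCommGroup E] [Module K E]
    (f : M →ₗ[K] N) (g : N →ₗ[K] P) (s : M ⊗[K] E) :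
    TensorProduct.map (g ∘ₗ f) LinearMap.id s
      = TensorProduct.map g LinearMap.id (TensorProduct.map f LinearMap.id s) := by
  induction s using TensorProduct.induction_on with
  | zero => simp
  | tmul a b => rfl
  | add u v hu hv => simp only [map_add, hu, hv]

theorem map_swap {M N P Q : Type*} [AddCommGroup M] [Module K M]
    [AddCommGroup N] [Module K N] [AddCommGroup P] [Module K P]
    [AddCommGroup Q] [Module K Q]
    (f : M →ₗ[K] P) (g : N →ₗ[K] Q) (s : M ⊗[K] N) :
    TensorProduct.map f LinearMap.id (TensorProduct.map LinearMap.id g s)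
      = TensorProduct.map LinearMap.id g (TensorProduct.map f LinearMap.id s) := by
  induction s using TensorProduct.induction_on with
  | zero => simp
  | tmul a b => rfl
  | add u v hu hv => simp only [map_add, hu, hv]

theorem mem_Bsub {C1 Hα : Type*}
    [AddCommGroup C1] [Module K C1] [AddCommGroup Hα] [Module K Hα]
    (L1 : Hα →ₗ[K] C1 ⊗[K] Hα) (u : C1) (x : Hα) :
    x ∈ Bsub K L1 u ↔ L1 x = u ⊗ₜ[K] x := by
  simp [Bsub, LinearMap.mem_ker, LinearMap.sub_apply, sub_eq_zero,
    TensorProduct.mk_apply]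

end Aux

/-- For a Hopf `π`-subcoalgebra `(C, σ)` of `H`, the family
`B_α = { h ∈ H_α : (σ_1 ⊗ I_α)Δ^H_{1,α}(h) = 1 ⊗ h }` consists of subalgebras
of the `H_α`, and is a right `π`-coideal of `H`:
`Δ^H_{α,β}(B_{αβ}) ⊆ B_α ⊗ H_β`. -/
theorem B_subalgebra_and_right_coideal
    (K : Type*) [Field K] (π : Type*) [Group π]
    (H : π → Type*) [∀ α, Ring (H α)] [∀ α, Algebra K (H α)]
    (C : π → Type*) [∀ α, Ring (C α)] [∀ α, Algebra K (C α)]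
    (hH : HopfPiCoalg K π H) (hC : HopfPiCoalg K π C)
    (S : HopfPiSub K π H C hH hC) :
    (∀ (α : π), (1 : H α) ∈
        Bsub K ((TensorProduct.map (S.σ 1) LinearMap.id) ∘ₗ
          hH.comul 1 α (one_mul α)) (1 : C 1)) ∧
    (∀ (α : π) (x y : H α),
        x ∈ Bsub K ((TensorProduct.map (S.σ 1) LinearMap.id) ∘ₗ
            hH.comul 1 α (one_mul α)) (1 : C 1) →
        y ∈ Bsub K ((TensorProduct.map (S.σ 1) LinearMap.id) ∘ₗ
            hH.comul 1 α (one_mul α)) (1 : C 1) →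
        x * y ∈ Bsub K ((TensorProduct.map (S.σ 1) LinearMap.id) ∘ₗ
            hH.comul 1 α (one_mul α)) (1 : C 1)) ∧
    (∀ (α β γ : π) (h : α * β = γ) (x : H γ),
        x ∈ Bsub K ((TensorProduct.map (S.σ 1) LinearMap.id) ∘ₗ
            hH.comul 1 γ (one_mul γ)) (1 : C 1) →
        hH.comul α β h x ∈ LinearMap.range (TensorProduct.map
          (Bsub K ((TensorProduct.map (S.σ 1) LinearMap.id) ∘ₗ
            hH.comul 1 α (one_mul α)) (1 : C 1)).subtype
          (LinearMap.id : H β →ₗ[K] H β))) := by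
  refine ⟨?_, ?_, ?_⟩
  · -- `1 ∈ B_α`
    intro α
    rw [mem_Bsub]
    simp only [LinearMap.comp_apply, hH.comul_one, Algebra.TensorProduct.one_def,
      TensorProduct.map_tmul, S.σ_one, LinearMap.id_apply]
  · -- `B_α` is closed under multiplication
    intro α x y hx hy
    rw [mem_Bsub] at hx hy ⊢
    simp only [LinearMap.comp_apply] at hx hy ⊢
    rw [hH.comul_mul, map_mul_of_mul _ _ (S.σ_mul 1) (fun _ _ => rfl), hx, hy,
      Algebra.TensorProduct.tmul_mul_tmul, one_mul]
  · -- right `π`-coideal property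
    intro α β γ h x hx
    subst h
    rw [mem_Bsub] at hx
    simp only [LinearMap.comp_apply] at hx
    have h1 : 1 * α * β = α * β := by rw [one_mul]
    have h2 : 1 * (α * β) = α * β := one_mul (α * β)
    have coas := DFunLike.congr_fun (hH.coassoc 1 α β (α * β) h1 h2) x
    simp only [LinearMap.comp_apply, LinearEquiv.coe_coe] at coas
    have e : α = 1 * α := (one_mul α).symm
    rw [comul_fst hH.toPiCoalg e rfl h1 x] at coas
    have hcc : ∀ y : H α, hH.comul 1 α rfl (lcast K H e y)
        = hH.comul 1 α (one_mul α) y :=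
      comul_transport hH.toPiCoalg (one_mul α) rfl e
    have hcomp : ∀ s : H α ⊗[K] H β,
        TensorProduct.map (hH.comul 1 α rfl) LinearMap.id
            (TensorProduct.map (lcast K H e) LinearMap.id s)
          = TensorProduct.map (hH.comul 1 α (one_mul α)) LinearMap.id s := by
      intro s
      induction s using TensorProduct.induction_on with
      | zero => simp
      | tmul a b =>
        simp only [TensorProduct.map_tmul, LinearMap.id_apply]
        rw [hcc a]
      | add u v hu hv => simp only [map_add, hu, hv]
    rw [hcomp (hH.comul α β rfl x)] at coas
    set t : H α ⊗[K] H β := hH.comul α β rfl x with ht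
    have e2 : TensorProduct.assoc K (C 1) (H α) (H β)
        (TensorProduct.map
          ((TensorProduct.map (S.σ 1) LinearMap.id) ∘ₗ hH.comul 1 α (one_mul α))
          LinearMap.id t) = (1 : C 1) ⊗ₜ[K] t := by
      rw [map_map_id (hH.comul 1 α (one_mul α))
        (TensorProduct.map (S.σ 1) LinearMap.id) t,
        ← TensorProduct.map_map_assoc, TensorProduct.map_id, coas,
        map_swap (S.σ 1) (hH.comul α β rfl), hx, TensorProduct.map_tmul,
        LinearMap.id_apply, ht]
    have hL : TensorProduct.map
        ((TensorProduct.map (S.σ 1) LinearMap.id) ∘ₗ hH.comul 1 α (one_mul α))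
        LinearMap.id t
        = (TensorProduct.assoc K (C 1) (H α) (H β)).symm
            ((1 : C 1) ⊗ₜ[K] t) := by
      rw [← e2, LinearEquiv.symm_apply_apply]
    have claim : ((((TensorProduct.map (S.σ 1) LinearMap.id) ∘ₗ
          hH.comul 1 α (one_mul α)) -
          (TensorProduct.mk K (C 1) (H α)) (1 : C 1)).rTensor (H β)) t = 0 := by
      rw [LinearMap.rTensor_sub, LinearMap.sub_apply]
      show TensorProduct.map
          ((TensorProduct.map (S.σ 1) LinearMap.id) ∘ₗ hH.comul 1 α (one_mul α))
          LinearMap.id t -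
        TensorProduct.map ((TensorProduct.mk K (C 1) (H α)) (1 : C 1))
          LinearMap.id t = 0
      rw [hL, mk_map_eq, sub_self]
    have hexact := Module.Flat.rTensor_exact (R := K) (H β)
      ((((TensorProduct.map (S.σ 1) LinearMap.id) ∘ₗ hH.comul 1 α (one_mul α)) -
        (TensorProduct.mk K (C 1) (H α)) (1 : C 1)).exact_subtype_ker_map)
    exact (hexact t).mp claim
end

section
/- Let H be a Hopf π-coalgebra and (C, σ) a left π-coisotropic quantum subgroup. For a, b ∈ H_{αβ}: L_{α,β}(ab) = Δ^H_{α,β}(a) Θ L_{α,β}(b), where (m ⊗ n) Θ (u ⊗ v) := ω_α(m ⊗ u) ⊗ nv for m ∈ H_α, u ∈ C_α, n, v ∈ H_β, with ω_α the left H_α-action on C_α. -/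
open TensorProduct LinearMap

/-- For a left `π`-coisotropic quantum subgroup `(C, σ)` of
`H` and `a, b ∈ H_{αβ}`, one has `L_{α,β}(ab) = Δ^H_{α,β}(a) Θ L_{α,β}(b)`,
where `(m ⊗ n) Θ (u ⊗ v) = ω_α(m ⊗ u) ⊗ n·v`. -/
theorem L_mul_Theta
    (K : Type*) [Field K] (π : Type*) [Group π]
    (H : π → Type*) [∀ α, Ring (H α)] [∀ α, Algebra K (H α)]
    (C : π → Type*) [∀ α, AddCommGroup (C α)] [∀ α, Module K (C α)]
    (hH : HopfPiCoalg K π H) (hC : PiCoalg K π C)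
    (co : Coisotropic K π H C hH hC) :
    ∀ (α β γ : π) (h : α * β = γ) (a b : H γ),
      ((TensorProduct.map (co.σ α) LinearMap.id) ∘ₗ hH.comul α β h) (a * b)
        = ((TensorProduct.map (co.ω α) (LinearMap.mul' K (H β))) ∘ₗ
            (TensorProduct.tensorTensorTensorComm K (H α) (H β) (C α) (H β)).toLinearMap)
            ((hH.comul α β h a) ⊗ₜ[K]
              (((TensorProduct.map (co.σ α) LinearMap.id) ∘ₗ hH.comul α β h) b)) := by
  intro α β γ h a b
  simp only [LinearMap.comp_apply]
  rw [hH.comul_mul α β γ h a b]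
  generalize hH.comul α β h a = x
  generalize hH.comul α β h b = y
  induction x using TensorProduct.induction_on with
  | zero => simp only [zero_mul, map_zero, TensorProduct.zero_tmul]
  | add p q hp hq => simp only [add_mul, map_add, TensorProduct.add_tmul] at *; rw [hp, hq]
  | tmul m n =>
    induction y using TensorProduct.induction_on with
    | zero => simp only [mul_zero, map_zero, TensorProduct.tmul_zero]
    | add p q hp hq =>
      simp only [mul_add, map_add, TensorProduct.tmul_add] at *; rw [hp, hq]
    | tmul u v =>
      simp only [Algebra.TensorProduct.tmul_mul_tmul, LinearMap.comp_apply, LinearEquiv.coe_coe,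
        TensorProduct.map_tmul, TensorProduct.tensorTensorTensorComm_tmul,
        LinearMap.id_coe, id_eq, LinearMap.mul'_apply]
      rw [co.σ_mod]
end

section
/- Let H be a Hopf π-coalgebra and (C, σ) a left π-coisotropic quantum subgroup. Define G_α = { h ∈ H_α : (σ_1 ⊗ I_α)Δ^H_{1,α}(h) = σ_1(1) ⊗ h }. Then each G_α is a subalgebra of H_α and G = {G_α} is a right π-coideal of H: Δ^H_{α,β}(G_{αβ}) ⊆ G_α ⊗ H_β. -/
set_option maxHeartbeats 1000000
set_option synthInstance.maxHeartbeats 400000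


open TensorProduct LinearMap

section Helpers

variable {K : Type*} [Field K] {π : Type*} [Group π]
  {H : π → Type*} [∀ α, Ring (H α)] [∀ α, Algebra K (H α)]
  {C : π → Type*} [∀ α, AddCommGroup (C α)] [∀ α, Module K (C α)]

/-- Transport along an equality of indices. -/
noncomputable def castL (K : Type*) [Field K] {π : Type*}
    (H : π → Type*) [∀ α, Ring (H α)] [∀ α, Algebra K (H α)]
    {α α' : π} (e : α = α') : H α →ₗ[K] H α' :=
  e ▸ (LinearMap.id : H α →ₗ[K] H α)

lemma castL_symm_comp {α α' : π} (e : α = α') :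
    castL K H e ∘ₗ castL K H e.symm = LinearMap.id := by
  subst e; rfl

lemma comul_cast_fst (hH : PiCoalg K π H) {α α' β γ : π} (e : α = α')
    (p : α * β = γ) (p' : α' * β = γ) :
    hH.comul α' β p' = TensorProduct.map (castL K H e) LinearMap.id ∘ₗ hH.comul α β p := by
  subst e
  rw [show castL K H rfl = (LinearMap.id : H α →ₗ[K] H α) from rfl,
    TensorProduct.map_id, LinearMap.id_comp]

lemma comul_cast_dom (hH : PiCoalg K π H) {α β γ γ' : π} (e : γ = γ')
    (p : α * β = γ) (p' : α * β = γ') :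
    hH.comul α β p = hH.comul α β p' ∘ₗ castL K H e := by
  subst e; rfl

/-- The key coassociativity consequence with nice index proofs. -/
lemma comul_coassoc_one (hH : PiCoalg K π H) (α β : π) :
    (TensorProduct.assoc K (H 1) (H α) (H β)).toLinearMap ∘ₗ
        TensorProduct.map (hH.comul 1 α (one_mul α)) LinearMap.id ∘ₗ hH.comul α β rfl
      = TensorProduct.map LinearMap.id (hH.comul α β rfl) ∘ₗ
          hH.comul 1 (α * β) (one_mul (α * β)) := by
  have h₁ : 1 * α * β = α * β := by rw [one_mul]
  have h₂ : 1 * (α * β) = α * β := one_mul _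
  have key := hH.coassoc 1 α β (α * β) h₁ h₂
  have e1 : hH.comul 1 α rfl
      = hH.comul 1 α (one_mul α) ∘ₗ castL K H (one_mul α) :=
    comul_cast_dom hH (one_mul α) rfl (one_mul α)
  have e2 : hH.comul (1 * α) β h₁
      = TensorProduct.map (castL K H (one_mul α).symm) LinearMap.id ∘ₗ hH.comul α β rfl :=
    comul_cast_fst hH (one_mul α).symm rfl h₁
  have e3 : hH.comul 1 (α * β) h₂ = hH.comul 1 (α * β) (one_mul (α * β)) := rfl
  have e4 : TensorProduct.map (hH.comul 1 α (one_mul α) ∘ₗ castL K H (one_mul α))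
        (LinearMap.id : H β →ₗ[K] H β) ∘ₗ
      TensorProduct.map (castL K H (one_mul α).symm) (LinearMap.id : H β →ₗ[K] H β)
      = TensorProduct.map (hH.comul 1 α (one_mul α)) LinearMap.id := by
    rw [← TensorProduct.map_comp, LinearMap.comp_assoc, castL_symm_comp,
      LinearMap.comp_id, LinearMap.id_comp]
  rw [e1, e2, e3] at key
  rw [← key]
  congr 1
  rw [← LinearMap.comp_assoc, e4]

variable {hH : HopfPiCoalg K π H} {hC : PiCoalg K π C}

/-- The auxiliary operator used to prove multiplicativity of `G_α`. -/
noncomputable def Psi (co : Coisotropic K π H C hH hC) (α : π) :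
    (H 1 ⊗[K] H α) ⊗[K] (C 1 ⊗[K] H α) →ₗ[K] C 1 ⊗[K] H α :=
  (TensorProduct.map (co.ω 1) (LinearMap.mul' K (H α))) ∘ₗ
    (TensorProduct.tensorTensorTensorComm K (H 1) (H α) (C 1) (H α)).toLinearMap

lemma Psi_keyA (co : Coisotropic K π H C hH hC) (α : π) (t s : H 1 ⊗[K] H α) :
    TensorProduct.map (co.σ 1) (LinearMap.id : H α →ₗ[K] H α) (t * s)
      = Psi co α (t ⊗ₜ[K] TensorProduct.map (co.σ 1) LinearMap.id s) := by
  induction t using TensorProduct.induction_on with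
  | zero => simp only [zero_mul, TensorProduct.zero_tmul, map_zero]
  | add t₁ t₂ h₁ h₂ => simp only [add_mul, map_add, TensorProduct.add_tmul, h₁, h₂]
  | tmul a b =>
    induction s using TensorProduct.induction_on with
    | zero => simp only [mul_zero, map_zero, TensorProduct.tmul_zero]
    | add s₁ s₂ h₁ h₂ => simp only [mul_add, map_add, TensorProduct.tmul_add, h₁, h₂]
    | tmul c d =>
      simp only [Psi, Algebra.TensorProduct.tmul_mul_tmul, TensorProduct.map_tmul,
        LinearMap.comp_apply, LinearEquiv.coe_coe,
        TensorProduct.tensorTensorTensorComm_tmul, LinearMap.mul'_apply,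
        LinearMap.id_apply, co.σ_mod]

lemma Psi_keyB (co : Coisotropic K π H C hH hC) (α : π) (y : H α) (t : H 1 ⊗[K] H α) :
    Psi co α (t ⊗ₜ[K] (co.σ 1 (1 : H 1) ⊗ₜ[K] y))
      = TensorProduct.map LinearMap.id (LinearMap.mulRight K y)
          (TensorProduct.map (co.σ 1) LinearMap.id t) := by
  induction t using TensorProduct.induction_on with
  | zero => simp only [TensorProduct.zero_tmul, map_zero]
  | add t₁ t₂ h₁ h₂ => simp only [TensorProduct.add_tmul, map_add, h₁, h₂]
  | tmul a b =>
    have hws : co.ω 1 (a ⊗ₜ[K] co.σ 1 (1 : H 1)) = co.σ 1 a := by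
      rw [← co.σ_mod, mul_one]
    simp only [Psi, LinearMap.comp_apply, LinearEquiv.coe_coe,
      TensorProduct.tensorTensorTensorComm_tmul, TensorProduct.map_tmul,
      LinearMap.mul'_apply, LinearMap.id_apply, LinearMap.mulRight_apply, hws]

end Helpers

/-- For a left `π`-coisotropic quantum subgroup `(C, σ)` of
`H`, the family `G_α = { h ∈ H_α : (σ_1 ⊗ I_α)Δ^H_{1,α}(h) = σ_1(1) ⊗ h }`
consists of subalgebras of the `H_α` and is a right `π`-coideal of `H`:
`Δ^H_{α,β}(G_{αβ}) ⊆ G_α ⊗ H_β`. -/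
theorem G_subalgebra_and_right_coideal
    (K : Type*) [Field K] (π : Type*) [Group π]
    (H : π → Type*) [∀ α, Ring (H α)] [∀ α, Algebra K (H α)]
    (C : π → Type*) [∀ α, AddCommGroup (C α)] [∀ α, Module K (C α)]
    (hH : HopfPiCoalg K π H) (hC : PiCoalg K π C)
    (co : Coisotropic K π H C hH hC) :
    (∀ (α : π), (1 : H α) ∈
        Bsub K ((TensorProduct.map (co.σ 1) LinearMap.id) ∘ₗ
          hH.comul 1 α (one_mul α)) (co.σ 1 (1 : H 1))) ∧
    (∀ (α : π) (x y : H α),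
        x ∈ Bsub K ((TensorProduct.map (co.σ 1) LinearMap.id) ∘ₗ
            hH.comul 1 α (one_mul α)) (co.σ 1 (1 : H 1)) →
        y ∈ Bsub K ((TensorProduct.map (co.σ 1) LinearMap.id) ∘ₗ
            hH.comul 1 α (one_mul α)) (co.σ 1 (1 : H 1)) →
        x * y ∈ Bsub K ((TensorProduct.map (co.σ 1) LinearMap.id) ∘ₗ
            hH.comul 1 α (one_mul α)) (co.σ 1 (1 : H 1))) ∧
    (∀ (α β γ : π) (h : α * β = γ) (x : H γ),
        x ∈ Bsub K ((TensorProduct.map (co.σ 1) LinearMap.id) ∘ₗ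
            hH.comul 1 γ (one_mul γ)) (co.σ 1 (1 : H 1)) →
        hH.comul α β h x ∈ LinearMap.range (TensorProduct.map
          (Bsub K ((TensorProduct.map (co.σ 1) LinearMap.id) ∘ₗ
            hH.comul 1 α (one_mul α)) (co.σ 1 (1 : H 1))).subtype
          (LinearMap.id : H β →ₗ[K] H β))) := by
  classical
  refine ⟨?_, ?_, ?_⟩
  · -- 1 ∈ G_α
    intro α
    simp only [Bsub, LinearMap.mem_ker, LinearMap.sub_apply, sub_eq_zero,
      LinearMap.comp_apply, TensorProduct.mk_apply]
    rw [hH.comul_one 1 α α (one_mul α), Algebra.TensorProduct.one_def]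
    simp [TensorProduct.map_tmul]
  · -- G_α closed under multiplication
    intro α x y hx hy
    simp only [Bsub, LinearMap.mem_ker, LinearMap.sub_apply, sub_eq_zero,
      LinearMap.comp_apply, TensorProduct.mk_apply] at hx hy ⊢
    calc TensorProduct.map (co.σ 1) LinearMap.id (hH.comul 1 α (one_mul α) (x * y))
        = TensorProduct.map (co.σ 1) LinearMap.id
            (hH.comul 1 α (one_mul α) x * hH.comul 1 α (one_mul α) y) := by
          rw [hH.comul_mul]
      _ = Psi co α (hH.comul 1 α (one_mul α) x ⊗ₜ[K]
            TensorProduct.map (co.σ 1) LinearMap.id (hH.comul 1 α (one_mul α) y)) :=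
          Psi_keyA co α _ _
      _ = Psi co α (hH.comul 1 α (one_mul α) x ⊗ₜ[K] (co.σ 1 (1 : H 1) ⊗ₜ[K] y)) := by
          rw [hy]
      _ = TensorProduct.map LinearMap.id (LinearMap.mulRight K y)
            (TensorProduct.map (co.σ 1) LinearMap.id (hH.comul 1 α (one_mul α) x)) :=
          Psi_keyB co α y _
      _ = TensorProduct.map LinearMap.id (LinearMap.mulRight K y)
            (co.σ 1 (1 : H 1) ⊗ₜ[K] x) := by rw [hx]
      _ = co.σ 1 (1 : H 1) ⊗ₜ[K] (x * y) := by
          simp [TensorProduct.map_tmul, LinearMap.mulRight_apply]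
  · -- right coideal
    intro α β γ h x hx
    subst h
    set u : C 1 := co.σ 1 (1 : H 1) with hu
    set L : H α →ₗ[K] C 1 ⊗[K] H α :=
      (TensorProduct.map (co.σ 1) LinearMap.id) ∘ₗ hH.comul 1 α (one_mul α) with hL
    set f : H α →ₗ[K] C 1 ⊗[K] H α := L - TensorProduct.mk K (C 1) (H α) u with hf
    have hexact : Function.Exact ((LinearMap.ker f).subtype.rTensor (H β))
        (f.rTensor (H β)) :=
      Module.Flat.rTensor_exact (H β) (LinearMap.exact_subtype_ker_map f)
    have hx' : TensorProduct.map (co.σ 1) LinearMap.id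
        (hH.comul 1 (α * β) (one_mul (α * β)) x) = u ⊗ₜ[K] x := by
      simpa only [Bsub, LinearMap.mem_ker, LinearMap.sub_apply, sub_eq_zero,
        LinearMap.comp_apply, TensorProduct.mk_apply] using hx
    -- coassociativity applied to x
    have hco : TensorProduct.map (hH.comul 1 α (one_mul α)) LinearMap.id
        (hH.comul α β rfl x)
      = (TensorProduct.assoc K (H 1) (H α) (H β)).symm
          (TensorProduct.map LinearMap.id (hH.comul α β rfl)
            (hH.comul 1 (α * β) (one_mul (α * β)) x)) := by
      have := congrArg (fun g => g x) (comul_coassoc_one hH.toPiCoalg α β)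
      simp only [LinearMap.comp_apply, LinearEquiv.coe_coe] at this
      rw [← this, LinearEquiv.symm_apply_apply]
    -- naturality of the associator
    have lemC : ∀ w : H 1 ⊗[K] (H α ⊗[K] H β),
        TensorProduct.map (TensorProduct.map (co.σ 1) LinearMap.id) LinearMap.id
            ((TensorProduct.assoc K (H 1) (H α) (H β)).symm w)
          = (TensorProduct.assoc K (C 1) (H α) (H β)).symm
              (TensorProduct.map (co.σ 1) LinearMap.id w) := by
      intro w
      induction w using TensorProduct.induction_on with
      | zero => simp only [map_zero]
      | add w₁ w₂ h₁ h₂ => simp only [map_add, h₁, h₂]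
      | tmul a w =>
        induction w using TensorProduct.induction_on with
        | zero => simp only [TensorProduct.tmul_zero, map_zero]
        | add w₁ w₂ h₁ h₂ =>
          simp only [TensorProduct.tmul_add, map_add, h₁, h₂]
        | tmul b c =>
          simp only [TensorProduct.assoc_symm_tmul, TensorProduct.map_tmul,
            LinearMap.id_apply]
    -- interchange of the two component maps
    have hinter : TensorProduct.map (co.σ 1)
          (LinearMap.id : H α ⊗[K] H β →ₗ[K] H α ⊗[K] H β) ∘ₗ
        TensorProduct.map (LinearMap.id : H 1 →ₗ[K] H 1) (hH.comul α β rfl)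
      = TensorProduct.map LinearMap.id (hH.comul α β rfl) ∘ₗ
        TensorProduct.map (co.σ 1) (LinearMap.id : H (α * β) →ₗ[K] H (α * β)) := by
      rw [← TensorProduct.map_comp, ← TensorProduct.map_comp,
        LinearMap.comp_id, LinearMap.id_comp, LinearMap.comp_id, LinearMap.id_comp]
    -- the `mk u` part
    have lemD : ∀ z : H α ⊗[K] H β,
        (TensorProduct.mk K (C 1) (H α) u).rTensor (H β) z
          = (TensorProduct.assoc K (C 1) (H α) (H β)).symm (u ⊗ₜ[K] z) := by
      intro z
      induction z using TensorProduct.induction_on with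
      | zero => simp only [TensorProduct.tmul_zero, map_zero]
      | add z₁ z₂ h₁ h₂ => simp only [map_add, TensorProduct.tmul_add, h₁, h₂]
      | tmul b c =>
        simp only [LinearMap.rTensor_tmul, TensorProduct.mk_apply,
          TensorProduct.assoc_symm_tmul]
    have hzero : f.rTensor (H β) (hH.comul α β rfl x) = 0 := by
      rw [hf, LinearMap.rTensor_sub, LinearMap.sub_apply, sub_eq_zero, hL,
        LinearMap.rTensor_comp, LinearMap.comp_apply]
      have h1 : (hH.comul 1 α (one_mul α)).rTensor (H β) (hH.comul α β rfl x)
          = (TensorProduct.assoc K (H 1) (H α) (H β)).symm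
              (TensorProduct.map LinearMap.id (hH.comul α β rfl)
                (hH.comul 1 (α * β) (one_mul (α * β)) x)) := hco
      rw [h1]
      have h2 : (TensorProduct.map (co.σ 1)
          (LinearMap.id : H α →ₗ[K] H α)).rTensor (H β)
            ((TensorProduct.assoc K (H 1) (H α) (H β)).symm
              (TensorProduct.map LinearMap.id (hH.comul α β rfl)
                (hH.comul 1 (α * β) (one_mul (α * β)) x)))
          = (TensorProduct.assoc K (C 1) (H α) (H β)).symm
              (TensorProduct.map (co.σ 1) LinearMap.id
                (TensorProduct.map LinearMap.id (hH.comul α β rfl)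
                  (hH.comul 1 (α * β) (one_mul (α * β)) x))) := lemC _
      rw [h2]
      have h3 := congrArg (fun g => g (hH.comul 1 (α * β) (one_mul (α * β)) x)) hinter
      simp only [LinearMap.comp_apply] at h3
      rw [h3, hx', lemD]
      simp only [TensorProduct.map_tmul, LinearMap.id_apply]
    exact (hexact _).mp hzero
end

section
/- Let H be a Hopf π-coalgebra, (C, σ) a Hopf π-subcoalgebra with left section g, and V a right π-comodule over C with coactions ρ. Then for each α ∈ π, the subspace Ind(ρ)_α ⊆ V_1 ⊗ H_α is a right B_α-module via (v ⊗ h)·b = v ⊗ hb, where B_α = { h ∈ H_α : L_{1,α}(h) = 1 ⊗ h }. -/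
open TensorProduct LinearMap

private lemma map_mul_tensor {K : Type*} [Field K] {A B A' B' : Type*}
    [Ring A] [Algebra K A] [Ring B] [Algebra K B]
    [Ring A'] [Algebra K A'] [Ring B'] [Algebra K B']
    (f : A →ₗ[K] A') (g : B →ₗ[K] B')
    (hf : ∀ x y, f (x * y) = f x * f y) (hg : ∀ x y, g (x * y) = g x * g y)
    (x y : A ⊗[K] B) :
    TensorProduct.map f g (x * y) = TensorProduct.map f g x * TensorProduct.map f g y := by
  induction x using TensorProduct.induction_on with
  | zero => simp
  | tmul a c =>
    induction y using TensorProduct.induction_on with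
    | zero => simp
    | tmul a' c' => simp [Algebra.TensorProduct.tmul_mul_tmul, hf, hg]
    | add y₁ y₂ h1 h2 => simp only [mul_add, map_add, h1, h2]
  | add x₁ x₂ h1 h2 => simp only [add_mul, map_add, h1, h2]

private lemma mul_one_tmul {K : Type*} [Field K] {A B : Type*}
    [Ring A] [Algebra K A] [Ring B] [Algebra K B] (b : B) (x : A ⊗[K] B) :
    x * (1 : A) ⊗ₜ[K] b = TensorProduct.map LinearMap.id (LinearMap.mulRight K b) x := by
  induction x using TensorProduct.induction_on with
  | zero => simp
  | tmul a c => simp [Algebra.TensorProduct.tmul_mul_tmul]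
  | add x₁ x₂ h1 h2 => simp only [add_mul, map_add, h1, h2]

private lemma assoc_mulRight {K : Type*} [Field K] {A B D : Type*}
    [AddCommGroup A] [Module K A] [AddCommGroup B] [Module K B]
    [Ring D] [Algebra K D] (b h : D) (y : A ⊗[K] B) :
    (TensorProduct.assoc K A B D) (y ⊗ₜ[K] (h * b))
      = TensorProduct.map LinearMap.id
          (TensorProduct.map LinearMap.id (LinearMap.mulRight K b))
          ((TensorProduct.assoc K A B D) (y ⊗ₜ[K] h)) := by
  induction y using TensorProduct.induction_on with
  | zero => simp
  | tmul w c => simp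
  | add y₁ y₂ h1 h2 =>
    simp only [TensorProduct.add_tmul, map_add, h1, h2]

/-- For a Hopf `π`-subcoalgebra `(C, σ)` of `H` with left
section `g` and a right `π`-comodule `V` over `C`, each `Ind(ρ)_α ⊆ V_1 ⊗ H_α`
is a right `B_α`-module via `(v ⊗ h)·b = v ⊗ h·b`, where
`B_α = { h : L_{1,α}(h) = 1 ⊗ h }`. -/
theorem ind_right_B_module
    (K : Type*) [Field K] (π : Type*) [Group π]
    (H : π → Type*) [∀ α, Ring (H α)] [∀ α, Algebra K (H α)]
    (C : π → Type*) [∀ α, Ring (C α)] [∀ α, Algebra K (C α)]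
    (V : π → Type*) [∀ α, AddCommGroup (V α)] [∀ α, Module K (V α)]
    (hH : HopfPiCoalg K π H) (hC : HopfPiCoalg K π C)
    (S : HopfPiSub K π H C hH hC)
    (G : PiSection K π H C hH hC S)
    (ρ : PiComodule K π C V hC.toPiCoalg) :
    -- the right action `x · b = (I ⊗ (·b)) x` preserves `Ind(ρ)_α`:
    (∀ (α : π) (b : H α),
        b ∈ Bsub K ((TensorProduct.map (S.σ 1) LinearMap.id) ∘ₗ
              hH.comul 1 α (one_mul α)) (1 : C 1) →
        ∀ x ∈ IndSub K ((TensorProduct.map (S.σ 1) LinearMap.id) ∘ₗ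
              hH.comul 1 α (one_mul α)) (ρ.coact 1 1 (mul_one 1)),
          (TensorProduct.map LinearMap.id (LinearMap.mulRight K b)) x
            ∈ IndSub K ((TensorProduct.map (S.σ 1) LinearMap.id) ∘ₗ
                hH.comul 1 α (one_mul α)) (ρ.coact 1 1 (mul_one 1))) ∧
    -- and it is a right action:
    (∀ (α : π) (x : V 1 ⊗[K] H α) (b c : H α),
        (TensorProduct.map LinearMap.id (LinearMap.mulRight K c))
            ((TensorProduct.map LinearMap.id (LinearMap.mulRight K b)) x)
          = (TensorProduct.map LinearMap.id (LinearMap.mulRight K (b * c))) x) ∧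
    (∀ (α : π) (x : V 1 ⊗[K] H α),
        (TensorProduct.map LinearMap.id (LinearMap.mulRight K (1 : H α))) x = x) := by
  refine ⟨?_, ?_, ?_⟩
  · intro α b hb x hx
    set L : H α →ₗ[K] C 1 ⊗[K] H α :=
      (TensorProduct.map (S.σ 1) LinearMap.id) ∘ₗ hH.comul 1 α (one_mul α) with hL
    simp only [Bsub, LinearMap.mem_ker, LinearMap.sub_apply,
      TensorProduct.mk_apply, sub_eq_zero] at hb
    -- key pointwise identity: L (h * b) = (I ⊗ (·b)) (L h)
    have key : ∀ h : H α,
        L (h * b) = TensorProduct.map LinearMap.id (LinearMap.mulRight K b) (L h) := by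
      intro h
      have hmul : L (h * b) = L h * L b := by
        simp only [hL, LinearMap.comp_apply, hH.comul_mul 1 α α (one_mul α) h b]
        exact map_mul_tensor (S.σ 1) LinearMap.id (S.σ_mul 1) (fun _ _ => rfl) _ _
      rw [hmul, hb, mul_one_tmul]
    simp only [IndSub, LinearMap.mem_ker, LinearMap.sub_apply,
      LinearMap.comp_apply, LinearEquiv.coe_coe, sub_eq_zero] at hx ⊢
    -- both sides of the membership equation commute with (I ⊗ (·b))
    have e1 : ∀ y : V 1 ⊗[K] H α, TensorProduct.map LinearMap.id L
        (TensorProduct.map LinearMap.id (LinearMap.mulRight K b) y)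
        = TensorProduct.map LinearMap.id
            (TensorProduct.map LinearMap.id (LinearMap.mulRight K b))
            (TensorProduct.map LinearMap.id L y) := by
      intro y
      induction y using TensorProduct.induction_on with
      | zero => simp
      | tmul v h => simp [key h]
      | add y₁ y₂ h1 h2 => simp only [map_add, h1, h2]
    have e2 : ∀ y : V 1 ⊗[K] H α, (TensorProduct.assoc K (V 1) (C 1) (H α))
        ((TensorProduct.map (ρ.coact 1 1 (mul_one 1)) LinearMap.id)
          (TensorProduct.map LinearMap.id (LinearMap.mulRight K b) y))
        = TensorProduct.map LinearMap.id
            (TensorProduct.map LinearMap.id (LinearMap.mulRight K b))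
            ((TensorProduct.assoc K (V 1) (C 1) (H α))
              ((TensorProduct.map (ρ.coact 1 1 (mul_one 1)) LinearMap.id) y)) := by
      intro y
      induction y using TensorProduct.induction_on with
      | zero => simp
      | tmul v h =>
        simp only [TensorProduct.map_tmul, LinearMap.id_coe, id_eq,
          LinearMap.mulRight_apply]
        exact assoc_mulRight b h (ρ.coact 1 1 (mul_one 1) v)
      | add y₁ y₂ h1 h2 => simp only [map_add, h1, h2]
    rw [e1, e2, hx]
  · intro α x b c
    rw [← LinearMap.comp_apply, ← TensorProduct.map_comp, LinearMap.mulRight_mul,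
      LinearMap.id_comp]
  · intro α x
    rw [LinearMap.mulRight_one, TensorProduct.map_id, LinearMap.id_apply]
end

section
/- Let H be a Hopf π-coalgebra and (C, σ) a Hopf π-subcoalgebra with left section g = {g_α : C_α → H_α} (so g_α(1)=1, L_{1,α} g_α = (I_1 ⊗ g_α)Δ^C_{1,α}, and g has a convolution inverse g⁻¹ = {g_α⁻¹ : C_{α⁻¹} → H_α}). Then for every α ∈ π: L_{1,α} ∘ g_α⁻¹ = (S^C_1 ⊗ g_α⁻¹) ∘ τ ∘ Δ^C_{α⁻¹,1}, where τ is the flip. -/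
open TensorProduct LinearMap

section CnvAux

variable {K : Type*} [Field K] {A : Type*} [Ring A] [Algebra K A]

/-- Convolution product of two linear maps into an algebra, with respect to a
given "comultiplication". -/
noncomputable def cnv {X Y Z : Type*} [AddCommGroup X] [Module K X]
    [AddCommGroup Y] [Module K Y] [AddCommGroup Z] [Module K Z]
    (Δ : Z →ₗ[K] X ⊗[K] Y) (f : X →ₗ[K] A) (g : Y →ₗ[K] A) : Z →ₗ[K] A :=
  mul' K A ∘ₗ TensorProduct.map f g ∘ₗ Δ

lemma cnv_apply {X Y Z : Type*} [AddCommGroup X] [Module K X]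
    [AddCommGroup Y] [Module K Y] [AddCommGroup Z] [Module K Z]
    (Δ : Z →ₗ[K] X ⊗[K] Y) (f : X →ₗ[K] A) (g : Y →ₗ[K] A) (z : Z) :
    cnv Δ f g z = mul' K A (TensorProduct.map f g (Δ z)) := rfl

lemma cnv_one_left {U Z : Type*} [AddCommGroup U] [Module K U]
    [AddCommGroup Z] [Module K Z]
    (Δ : Z →ₗ[K] U ⊗[K] Z) (ε : U →ₗ[K] K)
    (hcu : (TensorProduct.lid K Z).toLinearMap ∘ₗ
        TensorProduct.map ε LinearMap.id ∘ₗ Δ = LinearMap.id)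
    (f : Z →ₗ[K] A) :
    cnv Δ (Algebra.linearMap K A ∘ₗ ε) f = f := by
  ext z
  have h1 : ∀ t : U ⊗[K] Z,
      mul' K A (TensorProduct.map (Algebra.linearMap K A ∘ₗ ε) f t)
        = f ((TensorProduct.lid K Z) (TensorProduct.map ε LinearMap.id t)) := by
    intro t
    induction t using TensorProduct.induction_on with
    | zero => simp
    | tmul u z => simp [Algebra.smul_def]
    | add s t hs ht => simp only [map_add, hs, ht]
  have h2 := LinearMap.congr_fun hcu z
  simp only [LinearMap.comp_apply, LinearMap.id_apply, LinearEquiv.coe_coe] at h2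
  simp only [cnv, LinearMap.comp_apply, h1, h2]

lemma cnv_one_right {U Z : Type*} [AddCommGroup U] [Module K U]
    [AddCommGroup Z] [Module K Z]
    (Δ : Z →ₗ[K] Z ⊗[K] U) (ε : U →ₗ[K] K)
    (hcu : (TensorProduct.rid K Z).toLinearMap ∘ₗ
        TensorProduct.map LinearMap.id ε ∘ₗ Δ = LinearMap.id)
    (f : Z →ₗ[K] A) :
    cnv Δ f (Algebra.linearMap K A ∘ₗ ε) = f := by
  ext z
  have h1 : ∀ t : Z ⊗[K] U,
      mul' K A (TensorProduct.map f (Algebra.linearMap K A ∘ₗ ε) t)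
        = f ((TensorProduct.rid K Z) (TensorProduct.map LinearMap.id ε t)) := by
    intro t
    induction t using TensorProduct.induction_on with
    | zero => simp
    | tmul z u => simp [Algebra.algebraMap_eq_smul_one, mul_smul_comm]
    | add s t hs ht => simp only [map_add, hs, ht]
  have h2 := LinearMap.congr_fun hcu z
  simp only [LinearMap.comp_apply, LinearMap.id_apply, LinearEquiv.coe_coe] at h2
  simp only [cnv, LinearMap.comp_apply, h1, h2]

lemma cnv_assoc {X Y Z XY YZ T : Type*}
    [AddCommGroup X] [Module K X] [AddCommGroup Y] [Module K Y]
    [AddCommGroup Z] [Module K Z] [AddCommGroup XY] [Module K XY]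
    [AddCommGroup YZ] [Module K YZ] [AddCommGroup T] [Module K T]
    (ΔL : T →ₗ[K] XY ⊗[K] Z) (ΔXY : XY →ₗ[K] X ⊗[K] Y)
    (ΔR : T →ₗ[K] X ⊗[K] YZ) (ΔYZ : YZ →ₗ[K] Y ⊗[K] Z)
    (hco : (TensorProduct.assoc K X Y Z).toLinearMap ∘ₗ
        TensorProduct.map ΔXY LinearMap.id ∘ₗ ΔL
      = TensorProduct.map LinearMap.id ΔYZ ∘ₗ ΔR)
    (f : X →ₗ[K] A) (g : Y →ₗ[K] A) (h : Z →ₗ[K] A) :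
    cnv ΔL (cnv ΔXY f g) h = cnv ΔR f (cnv ΔYZ g h) := by
  have key : ∀ (s : X ⊗[K] Y) (z : Z),
      mul' K A (TensorProduct.map f g s) * h z
        = mul' K A (TensorProduct.map f (mul' K A ∘ₗ TensorProduct.map g h)
            ((TensorProduct.assoc K X Y Z) (s ⊗ₜ[K] z))) := by
    intro s z
    induction s using TensorProduct.induction_on with
    | zero => simp
    | tmul x y => simp [mul_assoc]
    | add a b ha hb => simp only [add_tmul, map_add, add_mul, ha, hb]
  have k1 : ∀ t : XY ⊗[K] Z,
      mul' K A (TensorProduct.map (cnv ΔXY f g) h t)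
        = mul' K A (TensorProduct.map f (mul' K A ∘ₗ TensorProduct.map g h)
            ((TensorProduct.assoc K X Y Z)
              (TensorProduct.map ΔXY LinearMap.id t))) := by
    intro t
    induction t using TensorProduct.induction_on with
    | zero => simp
    | tmul u z => simpa [cnv] using key (ΔXY u) z
    | add a b ha hb => simp only [map_add, ha, hb]
  have k2 : ∀ r : X ⊗[K] YZ,
      mul' K A (TensorProduct.map f (mul' K A ∘ₗ TensorProduct.map g h)
        (TensorProduct.map LinearMap.id ΔYZ r))
        = mul' K A (TensorProduct.map f (cnv ΔYZ g h) r) := by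
    intro r
    induction r using TensorProduct.induction_on with
    | zero => simp
    | tmul x u => simp [cnv]
    | add a b ha hb => simp only [map_add, ha, hb]
  ext t
  have hct := LinearMap.congr_fun hco t
  simp only [LinearMap.comp_apply, LinearEquiv.coe_coe] at hct
  simp only [cnv, LinearMap.comp_apply] at *
  rw [k1, hct, k2]

end CnvAux
set_option maxHeartbeats 2000000 in
set_option synthInstance.maxHeartbeats 1000000 in
/-- For a Hopf `π`-subcoalgebra `(C, σ)` of `H` with left
section `g`:  `L_{1,α} ∘ g_α⁻¹ = (S^C_1 ⊗ g_α⁻¹) ∘ τ ∘ Δ^C_{α⁻¹,1}`. -/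
theorem L_ginv
    (K : Type*) [Field K] (π : Type*) [Group π]
    (H : π → Type*) [∀ α, Ring (H α)] [∀ α, Algebra K (H α)]
    (C : π → Type*) [∀ α, Ring (C α)] [∀ α, Algebra K (C α)]
    (hH : HopfPiCoalg K π H) (hC : HopfPiCoalg K π C)
    (S : HopfPiSub K π H C hH hC)
    (G : PiSection K π H C hH hC S) :
    ∀ (α : π),
      ((TensorProduct.map (S.σ 1) LinearMap.id) ∘ₗ hH.comul 1 α (one_mul α)) ∘ₗ
          G.ginv α α⁻¹ rfl
        = (TensorProduct.map (hC.antipode 1 1 inv_one) (G.ginv α α⁻¹ rfl)) ∘ₗ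
            (TensorProduct.comm K (C α⁻¹) (C 1)).toLinearMap ∘ₗ
            hC.comul α⁻¹ 1 (mul_one α⁻¹) := by
  intro α
  -- generalized coassociativity for `C`
  have coassocC : ∀ (a b c d ab bc : π) (hab : a * b = ab) (hbc : b * c = bc)
      (h : ab * c = d) (h' : a * bc = d),
      (TensorProduct.assoc K (C a) (C b) (C c)).toLinearMap ∘ₗ
          (TensorProduct.map (hC.comul a b hab) LinearMap.id) ∘ₗ hC.comul ab c h
        = (TensorProduct.map LinearMap.id (hC.comul b c hbc)) ∘ₗ hC.comul a bc h' := by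
    intro a b c d ab bc hab hbc h h'
    subst hab; subst hbc
    exact hC.coassoc a b c d h h'
  -- the antipode identity of `C` at the unit of `π`
  have antipodeC1 : ∀ (h : (1 : π) * 1 = 1),
      mul' K (C 1) ∘ₗ
          TensorProduct.map (hC.antipode 1 1 inv_one) LinearMap.id ∘ₗ hC.comul 1 1 h
        = Algebra.linearMap K (C 1) ∘ₗ hC.counit := by
    intro h
    have gen : ∀ (b : π) (e : b = 1⁻¹) (h1 : b⁻¹ = 1) (h2 : b * 1 = 1),
        mul' K (C 1) ∘ₗ
            TensorProduct.map (hC.antipode b 1 h1) LinearMap.id ∘ₗ hC.comul b 1 h2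
          = Algebra.linearMap K (C 1) ∘ₗ hC.counit := by
      rintro b rfl h1 h2
      exact hC.antipode_left 1
    exact gen 1 inv_one.symm inv_one h
  set L : H α →ₗ[K] C 1 ⊗[K] H α :=
    TensorProduct.map (S.σ 1) LinearMap.id ∘ₗ hH.comul 1 α (one_mul α) with hL
  set R : C α⁻¹ →ₗ[K] C 1 ⊗[K] H α :=
    TensorProduct.map (hC.antipode 1 1 inv_one) (G.ginv α α⁻¹ rfl) ∘ₗ
      (TensorProduct.comm K (C α⁻¹) (C 1)).toLinearMap ∘ₗ
      hC.comul α⁻¹ 1 (mul_one α⁻¹) with hR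
  -- multiplicativity / unitality of `L`
  have σ1mul : ∀ s t : H 1 ⊗[K] H α,
      TensorProduct.map (S.σ 1) (LinearMap.id : H α →ₗ[K] H α) (s * t)
        = TensorProduct.map (S.σ 1) LinearMap.id s *
            TensorProduct.map (S.σ 1) LinearMap.id t := by
    intro s t
    induction s using TensorProduct.induction_on with
    | zero => simp
    | tmul a b =>
      induction t using TensorProduct.induction_on with
      | zero => simp
      | tmul c d => simp [Algebra.TensorProduct.tmul_mul_tmul, S.σ_mul]
      | add x y hx hy => simp only [mul_add, map_add, hx, hy]
    | add x y hx hy => simp only [add_mul, map_add, hx, hy]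
  have Lmul : ∀ x y : H α, L (x * y) = L x * L y := by
    intro x y
    simp only [hL, LinearMap.comp_apply, hH.comul_mul 1 α α (one_mul α) x y, σ1mul]
  have L1 : L (1 : H α) = 1 := by
    simp only [hL, LinearMap.comp_apply, hH.comul_one 1 α α (one_mul α),
      Algebra.TensorProduct.one_def, TensorProduct.map_tmul, LinearMap.id_apply, S.σ_one]
  have Lalg : ∀ k : K, L (algebraMap K (H α) k) = algebraMap K (C 1 ⊗[K] H α) k := by
    intro k
    rw [Algebra.algebraMap_eq_smul_one, Algebra.algebraMap_eq_smul_one, map_smul, L1]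
  -- Step A : (L ∘ g) * (L ∘ g⁻¹) = unit
  have hA : cnv (hC.comul α α⁻¹ (mul_inv_cancel α)) (L ∘ₗ G.g α) (L ∘ₗ G.ginv α α⁻¹ rfl)
      = Algebra.linearMap K (C 1 ⊗[K] H α) ∘ₗ hC.counit := by
    ext c
    have h1 : ∀ t : C α ⊗[K] C α⁻¹,
        mul' K (C 1 ⊗[K] H α)
            (TensorProduct.map (L ∘ₗ G.g α) (L ∘ₗ G.ginv α α⁻¹ rfl) t)
          = L (mul' K (H α) (TensorProduct.map (G.g α) (G.ginv α α⁻¹ rfl) t)) := by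
      intro t
      induction t using TensorProduct.induction_on with
      | zero => simp
      | tmul x y => simp [Lmul]
      | add x y hx hy => simp only [map_add, hx, hy]
    have h2 := LinearMap.congr_fun (G.conv_right α) c
    simp only [LinearMap.comp_apply] at h2
    simp only [cnv, LinearMap.comp_apply, h1, h2, Algebra.linearMap_apply, Lalg]
  -- the section property
  have g_sec := G.g_sec α
  rw [← hL] at g_sec
  -- Step B : R * (L ∘ g) = unit
  have hB : cnv (hC.comul α⁻¹ α (inv_mul_cancel α)) R (L ∘ₗ G.g α)
      = Algebra.linearMap K (C 1 ⊗[K] H α) ∘ₗ hC.counit := by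
    ext c
    simp only [cnv, LinearMap.comp_apply]
    rw [g_sec]
    have e1 : ∀ t : C α⁻¹ ⊗[K] C α,
        TensorProduct.map R
            (TensorProduct.map LinearMap.id (G.g α) ∘ₗ hC.comul 1 α (one_mul α)) t
          = TensorProduct.map
              (TensorProduct.map (hC.antipode 1 1 inv_one) (G.ginv α α⁻¹ rfl) ∘ₗ
                (TensorProduct.comm K (C α⁻¹) (C 1)).toLinearMap)
              (TensorProduct.map LinearMap.id (G.g α))
              ((TensorProduct.map LinearMap.id (hC.comul 1 α (one_mul α)))
                ((TensorProduct.map (hC.comul α⁻¹ 1 (mul_one α⁻¹)) LinearMap.id) t)) := by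
      intro t
      induction t using TensorProduct.induction_on with
      | zero => simp
      | tmul x y => simp [hR]
      | add x y hx hy => simp only [map_add, hx, hy]
    rw [e1]
    have co1 := LinearMap.congr_fun
      (coassocC α⁻¹ 1 α 1 α⁻¹ α (mul_one α⁻¹) (one_mul α)
        (inv_mul_cancel α) (inv_mul_cancel α)) c
    simp only [LinearMap.comp_apply, LinearEquiv.coe_coe] at co1
    have co1' : (TensorProduct.map (hC.comul α⁻¹ 1 (mul_one α⁻¹)) LinearMap.id)
          ((hC.comul α⁻¹ α (inv_mul_cancel α)) c)
        = (TensorProduct.assoc K (C α⁻¹) (C 1) (C α)).symm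
            ((TensorProduct.map LinearMap.id (hC.comul 1 α (one_mul α)))
              ((hC.comul α⁻¹ α (inv_mul_cancel α)) c)) := by
      rw [← co1, LinearEquiv.symm_apply_apply]
    rw [co1']
    have nat1 : ∀ t : C α⁻¹ ⊗[K] (C 1 ⊗[K] C α),
        (TensorProduct.map LinearMap.id (hC.comul 1 α (one_mul α)))
            ((TensorProduct.assoc K (C α⁻¹) (C 1) (C α)).symm t)
          = (TensorProduct.assoc K (C α⁻¹) (C 1) (C 1 ⊗[K] C α)).symm
              ((TensorProduct.map LinearMap.id
                (TensorProduct.map LinearMap.id (hC.comul 1 α (one_mul α)))) t) := by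
      intro t
      induction t using TensorProduct.induction_on with
      | zero => simp
      | tmul x w =>
        induction w using TensorProduct.induction_on with
        | zero => simp
        | tmul y z => simp [TensorProduct.assoc_symm_tmul]
        | add w1 w2 hw1 hw2 => simp only [tmul_add, map_add, hw1, hw2]
      | add t1 t2 ht1 ht2 => simp only [map_add, ht1, ht2]
    rw [nat1]
    have co2 : TensorProduct.map LinearMap.id (hC.comul 1 α (one_mul α)) ∘ₗ
          hC.comul 1 α (one_mul α)
        = (TensorProduct.assoc K (C 1) (C 1) (C α)).toLinearMap ∘ₗ
            TensorProduct.map (hC.comul 1 1 (one_mul 1)) LinearMap.id ∘ₗ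
            hC.comul 1 α (one_mul α) :=
      (coassocC 1 1 α α 1 α (one_mul 1) (one_mul α) (one_mul α) (one_mul α)).symm
    have comb : ∀ s : C α⁻¹ ⊗[K] C α,
        (TensorProduct.map LinearMap.id
            (TensorProduct.map LinearMap.id (hC.comul 1 α (one_mul α))))
            ((TensorProduct.map LinearMap.id (hC.comul 1 α (one_mul α))) s)
          = (TensorProduct.map LinearMap.id
              ((TensorProduct.assoc K (C 1) (C 1) (C α)).toLinearMap ∘ₗ
                TensorProduct.map (hC.comul 1 1 (one_mul 1)) LinearMap.id ∘ₗ
                hC.comul 1 α (one_mul α))) s := by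
      intro s
      induction s using TensorProduct.induction_on with
      | zero => simp
      | tmul x y =>
        have hy := LinearMap.congr_fun co2 y
        simp only [LinearMap.comp_apply, LinearEquiv.coe_coe] at hy
        simp [hy]
      | add x y hx hy => simp only [map_add, hx, hy]
    rw [comb]
    have B6 : ∀ t : C α⁻¹ ⊗[K] C α,
        mul' K (C 1 ⊗[K] H α)
          (TensorProduct.map
            (TensorProduct.map (hC.antipode 1 1 inv_one) (G.ginv α α⁻¹ rfl) ∘ₗ
              (TensorProduct.comm K (C α⁻¹) (C 1)).toLinearMap)
            (TensorProduct.map LinearMap.id (G.g α))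
            ((TensorProduct.assoc K (C α⁻¹) (C 1) (C 1 ⊗[K] C α)).symm
              ((TensorProduct.map LinearMap.id
                ((TensorProduct.assoc K (C 1) (C 1) (C α)).toLinearMap ∘ₗ
                  TensorProduct.map (hC.comul 1 1 (one_mul 1)) LinearMap.id ∘ₗ
                  hC.comul 1 α (one_mul α))) t)))
          = (1 : C 1) ⊗ₜ[K]
              (mul' K (H α) (TensorProduct.map (G.ginv α α⁻¹ rfl) (G.g α) t)) := by
      intro t
      induction t using TensorProduct.induction_on with
      | zero => simp
      | add x y hx hy => simp only [map_add, tmul_add, hx, hy]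
      | tmul c1 c2 =>
        have B4 : ∀ (s : C 1 ⊗[K] C 1) (q : C α),
            mul' K (C 1 ⊗[K] H α)
              (TensorProduct.map
                (TensorProduct.map (hC.antipode 1 1 inv_one) (G.ginv α α⁻¹ rfl) ∘ₗ
                  (TensorProduct.comm K (C α⁻¹) (C 1)).toLinearMap)
                (TensorProduct.map LinearMap.id (G.g α))
                ((TensorProduct.assoc K (C α⁻¹) (C 1) (C 1 ⊗[K] C α)).symm
                  (c1 ⊗ₜ[K] ((TensorProduct.assoc K (C 1) (C 1) (C α)) (s ⊗ₜ[K] q)))))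
              = (mul' K (C 1)
                  (TensorProduct.map (hC.antipode 1 1 inv_one) LinearMap.id s)) ⊗ₜ[K]
                  (G.ginv α α⁻¹ rfl c1 * G.g α q) := by
          intro s q
          induction s using TensorProduct.induction_on with
          | zero => simp
          | tmul x y =>
            simp [TensorProduct.assoc_tmul, TensorProduct.assoc_symm_tmul,
              TensorProduct.comm_tmul, Algebra.TensorProduct.tmul_mul_tmul]
          | add a b ha hb => simp only [add_tmul, map_add, tmul_add, ha, hb]
        have B5 : ∀ w : C 1 ⊗[K] C α,
            mul' K (C 1 ⊗[K] H α)
              (TensorProduct.map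
                (TensorProduct.map (hC.antipode 1 1 inv_one) (G.ginv α α⁻¹ rfl) ∘ₗ
                  (TensorProduct.comm K (C α⁻¹) (C 1)).toLinearMap)
                (TensorProduct.map LinearMap.id (G.g α))
                ((TensorProduct.assoc K (C α⁻¹) (C 1) (C 1 ⊗[K] C α)).symm
                  (c1 ⊗ₜ[K] ((TensorProduct.assoc K (C 1) (C 1) (C α))
                    ((TensorProduct.map (hC.comul 1 1 (one_mul 1)) LinearMap.id) w)))))
              = (1 : C 1) ⊗ₜ[K]
                  (G.ginv α α⁻¹ rfl c1 *
                    G.g α ((TensorProduct.lid K (C α))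
                      ((TensorProduct.map hC.counit LinearMap.id) w))) := by
          intro w
          induction w using TensorProduct.induction_on with
          | zero => simp
          | tmul p q =>
            have h4 := B4 (hC.comul 1 1 (one_mul 1) p) q
            have h5 := LinearMap.congr_fun (antipodeC1 (one_mul 1)) p
            simp only [LinearMap.comp_apply] at h5
            simp only [TensorProduct.map_tmul, LinearMap.id_apply]
            rw [h4, h5]
            simp [Algebra.linearMap_apply, Algebra.algebraMap_eq_smul_one,
              smul_tmul', tmul_smul, mul_smul_comm, TensorProduct.lid_tmul]
          | add w1 w2 hw1 hw2 =>
            simp only [map_add, tmul_add, mul_add, hw1, hw2]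
        have h6 := LinearMap.congr_fun (hC.counit_comul α) c2
        simp only [LinearMap.comp_apply, LinearMap.id_apply, LinearEquiv.coe_coe] at h6
        have h7 := B5 (hC.comul 1 α (one_mul α) c2)
        simp only [TensorProduct.map_tmul, LinearMap.id_apply, LinearMap.comp_apply,
          LinearEquiv.coe_coe, LinearMap.mul'_apply]
        rw [h7, h6]
    rw [B6]
    have h8 := LinearMap.congr_fun (G.conv_left α) c
    simp only [LinearMap.comp_apply] at h8
    rw [h8]
    simp [Algebra.linearMap_apply, Algebra.algebraMap_eq_smul_one,
      Algebra.TensorProduct.one_def, tmul_smul]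
  -- assemble everything by associativity of convolution
  have hAssoc := cnv_assoc
    (hC.comul 1 α⁻¹ (one_mul α⁻¹)) (hC.comul α⁻¹ α (inv_mul_cancel α))
    (hC.comul α⁻¹ 1 (mul_one α⁻¹)) (hC.comul α α⁻¹ (mul_inv_cancel α))
    (coassocC α⁻¹ α α⁻¹ α⁻¹ 1 1 (inv_mul_cancel α) (mul_inv_cancel α)
      (one_mul α⁻¹) (mul_one α⁻¹))
    R (L ∘ₗ G.g α) (L ∘ₗ G.ginv α α⁻¹ rfl)
  calc L ∘ₗ G.ginv α α⁻¹ rfl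
      = cnv (hC.comul 1 α⁻¹ (one_mul α⁻¹))
          (Algebra.linearMap K (C 1 ⊗[K] H α) ∘ₗ hC.counit)
          (L ∘ₗ G.ginv α α⁻¹ rfl) :=
        (cnv_one_left _ _ (hC.counit_comul α⁻¹) _).symm
    _ = cnv (hC.comul 1 α⁻¹ (one_mul α⁻¹))
          (cnv (hC.comul α⁻¹ α (inv_mul_cancel α)) R (L ∘ₗ G.g α))
          (L ∘ₗ G.ginv α α⁻¹ rfl) := by rw [hB]
    _ = cnv (hC.comul α⁻¹ 1 (mul_one α⁻¹)) R
          (cnv (hC.comul α α⁻¹ (mul_inv_cancel α)) (L ∘ₗ G.g α)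
            (L ∘ₗ G.ginv α α⁻¹ rfl)) := hAssoc
    _ = cnv (hC.comul α⁻¹ 1 (mul_one α⁻¹)) R
          (Algebra.linearMap K (C 1 ⊗[K] H α) ∘ₗ hC.counit) := by rw [hA]
    _ = R := cnv_one_right _ _ (hC.comul_counit α⁻¹) _
end

section
/- Let H be a Hopf π-coalgebra and (C, σ) a Hopf π-subcoalgebra with left section g. Then for every h ∈ H_α one has h = g_α(σ_α(h₁^α)) · g_α⁻¹(σ_{α⁻¹}(h₂₁^{α⁻¹})) · h₂₂^α, where Δ_{α,1}(h) = h₁^α ⊗ h₂^1 and Δ_{α⁻¹,α}(h₂^1) = h₂₁^{α⁻¹} ⊗ h₂₂^α (Sweedler notation). Equivalently, h = μ_α(μ_α(g_α σ_α ⊗ g_α⁻¹ σ_{α⁻¹}) ⊗ I_α)(I_α ⊗ Δ^H_{α⁻¹,α})Δ^H_{α,1}(h). -/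
open TensorProduct LinearMap

/-- Generalized coassociativity, where the intermediate products `α*β` and
`β*γ` are replaced by arbitrary indices together with proofs. -/
lemma PiCoalg.coassoc' {K : Type*} [Field K] {π : Type*} [Group π]
    {C : π → Type*} [∀ α, AddCommGroup (C α)] [∀ α, Module K (C α)]
    (hP : PiCoalg K π C) (α β γ δ ab bc : π) (hab : α * β = ab)
    (hbc : β * γ = bc) (h : ab * γ = δ) (h' : α * bc = δ) :
    (TensorProduct.assoc K (C α) (C β) (C γ)).toLinearMap ∘ₗ
        (TensorProduct.map (hP.comul α β hab) LinearMap.id) ∘ₗ hP.comul ab γ h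
      = (TensorProduct.map LinearMap.id (hP.comul β γ hbc)) ∘ₗ hP.comul α bc h' := by
  subst hab hbc
  exact hP.coassoc α β γ δ h h'

lemma symm_comp_cancel {K : Type*} [Field K] {M N P : Type*}
    [AddCommGroup M] [Module K M] [AddCommGroup N] [Module K N]
    [AddCommGroup P] [Module K P] (e : M ≃ₗ[K] N) (f : P →ₗ[K] M) :
    e.symm.toLinearMap ∘ₗ e.toLinearMap ∘ₗ f = f := by
  ext x; simp

lemma mul'_comp_algebraMap (K : Type*) [Field K] (A : Type*) [Ring A]
    [Algebra K A] :
    (LinearMap.mul' K A) ∘ₗ TensorProduct.map (Algebra.linearMap K A) LinearMap.id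
      = (TensorProduct.lid K A).toLinearMap := by
  apply TensorProduct.ext'
  intro k a
  simp [Algebra.smul_def]

/-- For a Hopf `π`-subcoalgebra `(C, σ)` of `H` with left
section `g`, every `h ∈ H_α` satisfies
`h = g_α(σ_α(h₁)) · g_α⁻¹(σ_{α⁻¹}(h₂₁)) · h₂₂`, i.e.
`μ_α(μ_α(g_α σ_α ⊗ g_α⁻¹ σ_{α⁻¹}) ⊗ I)(I ⊗ Δ_{α⁻¹,α})Δ_{α,1} = id`. -/
theorem section_decomposition
    (K : Type*) [Field K] (π : Type*) [Group π]
    (H : π → Type*) [∀ α, Ring (H α)] [∀ α, Algebra K (H α)]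
    (C : π → Type*) [∀ α, Ring (C α)] [∀ α, Algebra K (C α)]
    (hH : HopfPiCoalg K π H) (hC : HopfPiCoalg K π C)
    (S : HopfPiSub K π H C hH hC)
    (G : PiSection K π H C hH hC S) :
    ∀ (α : π),
      (LinearMap.mul' K (H α)) ∘ₗ
          (TensorProduct.map
            ((LinearMap.mul' K (H α)) ∘ₗ
              (TensorProduct.map ((G.g α) ∘ₗ S.σ α)
                ((G.ginv α α⁻¹ rfl) ∘ₗ S.σ α⁻¹)))
            LinearMap.id) ∘ₗ
          (TensorProduct.assoc K (H α) (H α⁻¹) (H α)).symm.toLinearMap ∘ₗ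
          (TensorProduct.map LinearMap.id (hH.comul α⁻¹ α (inv_mul_cancel α))) ∘ₗ
          hH.comul α 1 (mul_one α)
        = LinearMap.id := by
  intro α
  have key2 : (LinearMap.mul' K (H α)) ∘ₗ
      (TensorProduct.map ((G.g α) ∘ₗ S.σ α) ((G.ginv α α⁻¹ rfl) ∘ₗ S.σ α⁻¹)) ∘ₗ
        hH.comul α α⁻¹ (mul_inv_cancel α)
      = (Algebra.linearMap K (H α)) ∘ₗ hH.counit := by
    rw [TensorProduct.map_comp, LinearMap.comp_assoc,
      ← S.σ_comul α α⁻¹ 1 (mul_inv_cancel α), ← LinearMap.comp_assoc,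
      ← LinearMap.comp_assoc, LinearMap.comp_assoc (hC.comul α α⁻¹ (mul_inv_cancel α)) _ _,
      G.conv_right α, LinearMap.comp_assoc, S.σ_counit]
  have key1 := PiCoalg.coassoc' hH.toPiCoalg α α⁻¹ α α 1 1 (mul_inv_cancel α)
    (inv_mul_cancel α) (one_mul α) (mul_one α)
  rw [← key1, symm_comp_cancel,
    ← LinearMap.comp_assoc (hH.comul 1 α (one_mul α)) _ _,
    ← TensorProduct.map_comp, LinearMap.id_comp,
    LinearMap.comp_assoc _ _ (LinearMap.mul' K (H α)), key2]
  have hsplit := TensorProduct.map_comp (Algebra.linearMap K (H α))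
    (LinearMap.id (R := K) (M := H α)) hH.counit (LinearMap.id)
  rw [LinearMap.id_comp] at hsplit
  rw [hsplit, ← LinearMap.comp_assoc _ _ (LinearMap.mul' K (H α)),
    ← LinearMap.comp_assoc, mul'_comp_algebraMap, LinearMap.comp_assoc,
    hH.counit_comul α]
end
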